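/- The kernel K_α satisfies the differential–difference identity (u·∂/∂u + z̄·∂/∂z̄ + α)K_α(φ,s;z,u) = −((−1/2+is)(−α+1/2+is)/(2is))·K_α(φ,s+i;z,u) + ((1/2+is)(α−1/2+is)/(2is))·K_α(φ,s−i;z,u) − ((−α+1/2+is)/(2is(−1/2+is)))·∂²/∂φ² K_α(φ,s+i;z,u), for all z,u∈D, φ∈[0,2π], and s∈ℂ for which all terms are defined (s∉{0, −i/2}). -/

import Mathlib

/-!
With `A = 1 - z̄ e^{iφ}`, `B = 1 - u e^{-iφ}` and `C = 1 - z̄ u`, the kernel is the monomial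
`A^p B^p C^q` with `p = -1/2 - is`, `q = -α + 1/2 + is`, and `s ↦ s ± i` shifts `(p, q)`
by `(±1, ∓1)`. Since `u ∂_u B = B - 1`, `z̄ ∂_z̄ A = A - 1`, `(u ∂_u + z̄ ∂_z̄) C = 2(C - 1)`,
`∂_φ A = i(A - 1)` and `∂_φ B = -i(B - 1)`, the Euler operator and `∂_φ` send such a
monomial to a combination of monomials with exponents lowered by at most one. After
dividing by `A^{p-1} B^{p-1} C^{q-1}` the identity becomes polynomial in `A, B, C`, and it
holds because `e^{iφ} e^{-iφ} = 1` forces `C = A + B - AB`.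
-/

open MeasureTheory Metric Set
open scoped Real

noncomputable section

/-- The open unit disk in ℂ. -/
def Disk : Set ℂ := Metric.ball (0 : ℂ) 1

/-- The kernel `K_α(φ,s;z,u)` written as a holomorphic function of the variables `v = z̄`
and `u`; thus `K_α(φ,s;z,u) = KB α φ s z̄ u`. -/
def KB (α : ℝ) (φ : ℝ) (s : ℂ) (v u : ℂ) : ℂ :=
  (1 - v * Complex.exp (Complex.I * φ)) ^ (-(1/2 : ℂ) - Complex.I * s) *
  (1 - u * Complex.exp (-(Complex.I * φ))) ^ (-(1/2 : ℂ) - Complex.I * s) *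
  (1 - v * u) ^ (-((α : ℂ) - 1/2 - Complex.I * s))

open Complex

lemma one_sub_mem_slitPlane {w : ℂ} (hw : ‖w‖ < 1) : 1 - w ∈ slitPlane := by
  simpa [sub_eq_add_neg] using mem_slitPlane_of_norm_lt_one (z := -w) (by simpa using hw)

lemma cpow_add_one_of_ne_zero {x : ℂ} (hx : x ≠ 0) (a : ℂ) : x ^ (a + 1) = x ^ a * x := by
  rw [cpow_add _ _ hx, cpow_one]

lemma cpow_eq_cpow_sub_one_mul {x : ℂ} (hx : x ≠ 0) (a : ℂ) : x ^ a = x ^ (a - 1) * x := by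
  rw [← cpow_add_one_of_ne_zero hx, sub_add_cancel]

lemma one_sub_mul_eq_add_sub_mul_cexp (v u : ℂ) (ψ : ℝ) :
    1 - v * u = (1 - v * cexp (I * ψ)) + (1 - u * cexp (-(I * ψ)))
      - (1 - v * cexp (I * ψ)) * (1 - u * cexp (-(I * ψ))) := by
  have h : cexp (I * ψ) * cexp (-(I * ψ)) = 1 := by rw [← exp_add, add_neg_cancel, exp_zero]
  linear_combination (v * u) * h

def kernelMonomial (a b c : ℂ) (ψ : ℝ) (v u : ℂ) : ℂ :=
  (1 - v * cexp (I * ψ)) ^ a * (1 - u * cexp (-(I * ψ))) ^ b * (1 - v * u) ^ c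

lemma KB_eq_kernelMonomial {α : ℝ} {s a c : ℂ} (ha : -(1/2 : ℂ) - I * s = a)
    (hc : -((α : ℂ) - 1/2 - I * s) = c) (ψ : ℝ) (v u : ℂ) :
    KB α ψ s v u = kernelMonomial a a c ψ v u := by
  subst ha hc; rfl

section

variable {v u : ℂ}

lemma one_sub_mul_cexp_mem_slitPlane (hv : ‖v‖ < 1) (ψ : ℝ) :
    1 - v * cexp (I * ψ) ∈ slitPlane :=
  one_sub_mem_slitPlane (by rwa [norm_mul, norm_exp_I_mul_ofReal, mul_one])

lemma one_sub_mul_cexp_neg_mem_slitPlane (hv : ‖v‖ < 1) (ψ : ℝ) :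
    1 - v * cexp (-(I * ψ)) ∈ slitPlane := by
  simpa using one_sub_mul_cexp_mem_slitPlane hv (-ψ)

lemma one_sub_mul_mem_slitPlane (hv : ‖v‖ < 1) (hu : ‖u‖ < 1) : 1 - v * u ∈ slitPlane :=
  one_sub_mem_slitPlane (by rw [norm_mul]; nlinarith [norm_nonneg v, norm_nonneg u])

lemma kernelMonomial_add_one_fst (hv : ‖v‖ < 1) (a b c : ℂ) (ψ : ℝ) :
    kernelMonomial (a + 1) b c ψ v u = kernelMonomial a b c ψ v u * (1 - v * cexp (I * ψ)) := by
  unfold kernelMonomial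
  rw [cpow_add_one_of_ne_zero (slitPlane_ne_zero <| one_sub_mul_cexp_mem_slitPlane hv ψ)]
  ring

lemma kernelMonomial_add_one_snd (hu : ‖u‖ < 1) (a b c : ℂ) (ψ : ℝ) :
    kernelMonomial a (b + 1) c ψ v u
      = kernelMonomial a b c ψ v u * (1 - u * cexp (-(I * ψ))) := by
  unfold kernelMonomial
  rw [cpow_add_one_of_ne_zero (slitPlane_ne_zero <| one_sub_mul_cexp_neg_mem_slitPlane hu ψ)]
  ring

lemma kernelMonomial_add_one_thd (hv : ‖v‖ < 1) (hu : ‖u‖ < 1) (a b c : ℂ) (ψ : ℝ) :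
    kernelMonomial a b (c + 1) ψ v u = kernelMonomial a b c ψ v u * (1 - v * u) := by
  unfold kernelMonomial
  rw [cpow_add_one_of_ne_zero (slitPlane_ne_zero <| one_sub_mul_mem_slitPlane hv hu)]
  ring

lemma hasDerivAt_kernelMonomial_phi (hv : ‖v‖ < 1) (hu : ‖u‖ < 1) (a b c : ℂ) (ψ : ℝ) :
    HasDerivAt (fun ψ ↦ kernelMonomial a b c ψ v u)
      (I * (a * (kernelMonomial a b c ψ v u - kernelMonomial (a - 1) b c ψ v u)
        - b * (kernelMonomial a b c ψ v u - kernelMonomial a (b - 1) c ψ v u))) ψ := by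
  have hA := one_sub_mul_cexp_mem_slitPlane hv ψ
  have hB := one_sub_mul_cexp_neg_mem_slitPlane hu ψ
  have hI : HasDerivAt (fun t : ℝ ↦ I * t) I ψ := by
    simpa using (ofRealCLM.hasDerivAt (x := ψ)).const_mul I
  have hA' := (hasStrictDerivAt_cpow_const (c := a) hA).hasDerivAt.comp ψ
    ((hI.cexp.const_mul v).const_sub 1)
  have hB' := (hasStrictDerivAt_cpow_const (c := b) hB).hasDerivAt.comp ψ
    ((hI.neg.cexp.const_mul u).const_sub 1)
  refine ((hA'.mul hB').mul_const ((1 - v * u) ^ c)).congr_deriv ?_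
  simp only [kernelMonomial, Function.comp_apply, Pi.neg_apply]
  rw [cpow_eq_cpow_sub_one_mul (slitPlane_ne_zero hA) a,
    cpow_eq_cpow_sub_one_mul (slitPlane_ne_zero hB) b]
  ring

lemma mul_deriv_kernelMonomial_u (hv : ‖v‖ < 1) (hu : ‖u‖ < 1) (a b c : ℂ) (ψ : ℝ) :
    u * deriv (fun u' ↦ kernelMonomial a b c ψ v u') u
      = b * (kernelMonomial a b c ψ v u - kernelMonomial a (b - 1) c ψ v u)
        + c * (kernelMonomial a b c ψ v u - kernelMonomial a b (c - 1) ψ v u) := by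
  have hB := one_sub_mul_cexp_neg_mem_slitPlane hu ψ
  have hC := one_sub_mul_mem_slitPlane hv hu
  have hB' := (((hasDerivAt_id u).mul_const (cexp (-(I * ψ)))).const_sub 1).cpow_const (c := b) hB
  have hC' := (((hasDerivAt_id u).const_mul v).const_sub 1).cpow_const (c := c) hC
  have h := (hB'.const_mul ((1 - v * cexp (I * ψ)) ^ a)).mul hC'
  simp only [id, Pi.mul_def] at h
  simp only [kernelMonomial]
  rw [h.deriv, cpow_eq_cpow_sub_one_mul (slitPlane_ne_zero hB) b,
    cpow_eq_cpow_sub_one_mul (slitPlane_ne_zero hC) c]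
  ring

lemma mul_deriv_kernelMonomial_v (hv : ‖v‖ < 1) (hu : ‖u‖ < 1) (a b c : ℂ) (ψ : ℝ) :
    v * deriv (fun v' ↦ kernelMonomial a b c ψ v' u) v
      = a * (kernelMonomial a b c ψ v u - kernelMonomial (a - 1) b c ψ v u)
        + c * (kernelMonomial a b c ψ v u - kernelMonomial a b (c - 1) ψ v u) := by
  have hA := one_sub_mul_cexp_mem_slitPlane hv ψ
  have hC := one_sub_mul_mem_slitPlane hv hu
  have hA' := (((hasDerivAt_id v).mul_const (cexp (I * ψ))).const_sub 1).cpow_const (c := a) hA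
  have hC' := (((hasDerivAt_id v).mul_const u).const_sub 1).cpow_const (c := c) hC
  have h := (hA'.mul_const ((1 - u * cexp (-(I * ψ))) ^ b)).mul hC'
  simp only [id, Pi.mul_def] at h
  simp only [kernelMonomial]
  rw [h.deriv, cpow_eq_cpow_sub_one_mul (slitPlane_ne_zero hA) a,
    cpow_eq_cpow_sub_one_mul (slitPlane_ne_zero hC) c]
  ring

lemma deriv_deriv_kernelMonomial_phi (hv : ‖v‖ < 1) (hu : ‖u‖ < 1) (a c : ℂ) (φ : ℝ) :
    deriv (deriv fun ψ ↦ kernelMonomial a a c ψ v u) φ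
      = -a * (kernelMonomial a (a - 1) c φ v u + kernelMonomial (a - 1) a c φ v u
        - 2 * a * kernelMonomial (a - 1) (a - 1) c φ v u
        + (a - 1) * (kernelMonomial a (a - 1 - 1) c φ v u
          + kernelMonomial (a - 1 - 1) a c φ v u)) := by
  have h : deriv (fun ψ ↦ kernelMonomial a a c ψ v u)
      = fun ψ ↦ I * a *
          (kernelMonomial a (a - 1) c ψ v u - kernelMonomial (a - 1) a c ψ v u) := by
    funext ψ
    rw [(hasDerivAt_kernelMonomial_phi hv hu a a c ψ).deriv]
    ring
  have h' := ((hasDerivAt_kernelMonomial_phi hv hu a (a - 1) c φ).sub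
    (hasDerivAt_kernelMonomial_phi hv hu (a - 1) a c φ)).const_mul (I * a)
  simp only [Pi.sub_apply] at h'
  rw [h, h'.deriv]
  ring_nf
  simp only [I_sq]
  ring

end

theorem stmt_9_general (α : ℝ) (z u : ℂ) (hz : z ∈ Disk) (hu : u ∈ Disk)
    (φ : ℝ) (s : ℂ)
    (hs0 : s ≠ 0) (hs1 : s ≠ -Complex.I / 2) :
    u * deriv (fun u' => KB α φ s (starRingEnd ℂ z) u') u
      + (starRingEnd ℂ z) * deriv (fun v => KB α φ s v u) (starRingEnd ℂ z)
      + (α : ℂ) * KB α φ s (starRingEnd ℂ z) u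
    = -(((-(1/2 : ℂ) + Complex.I * s) * (-(α : ℂ) + 1/2 + Complex.I * s)) /
          (2 * Complex.I * s)) * KB α φ (s + Complex.I) (starRingEnd ℂ z) u
      + (((1/2 : ℂ) + Complex.I * s) * ((α : ℂ) - 1/2 + Complex.I * s)) /
          (2 * Complex.I * s) * KB α φ (s - Complex.I) (starRingEnd ℂ z) u
      - ((-(α : ℂ) + 1/2 + Complex.I * s) /
          (2 * Complex.I * s * (-(1/2 : ℂ) + Complex.I * s))) *
        deriv (deriv (fun ψ : ℝ => KB α ψ (s + Complex.I) (starRingEnd ℂ z) u)) φ := by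
  have hv : ‖starRingEnd ℂ z‖ < 1 := by simpa [Disk] using hz
  replace hu : ‖u‖ < 1 := by simpa [Disk] using hu
  generalize starRingEnd ℂ z = v at hv ⊢
  have hIs : I * s ≠ 0 := mul_ne_zero I_ne_zero hs0
  -- the shape `field_simp` gives the denominator `-(1/2) + I * s`
  have hpole : -1 + 2 * (I * s) ≠ 0 := by
    contrapose! hs1
    linear_combination (-I / 2) * hs1 + s * I_mul_I
  generalize ha : -(3/2 : ℂ) - I * s = a
  generalize hc : -(α : ℂ) - 1/2 + I * s = c
  have hK : ∀ ψ v u, KB α ψ s v u = kernelMonomial (a + 1) (a + 1) (c + 1) ψ v u :=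
    KB_eq_kernelMonomial (by rw [← ha]; ring) (by rw [← hc]; ring)
  have hKadd : ∀ ψ v u, KB α ψ (s + I) v u = kernelMonomial (a + 1 + 1) (a + 1 + 1) c ψ v u :=
    KB_eq_kernelMonomial (by rw [← ha]; linear_combination -I_mul_I)
      (by rw [← hc]; linear_combination I_mul_I)
  have hKsub : ∀ ψ v u, KB α ψ (s - I) v u = kernelMonomial a a (c + 1 + 1) ψ v u :=
    KB_eq_kernelMonomial (by rw [← ha]; linear_combination I_mul_I)
      (by rw [← hc]; linear_combination -I_mul_I)
  simp only [hK, hKadd, hKsub]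
  rw [mul_deriv_kernelMonomial_u hv hu, mul_deriv_kernelMonomial_v hv hu,
    deriv_deriv_kernelMonomial_phi hv hu]
  simp only [add_sub_cancel_right, kernelMonomial_add_one_fst hv, kernelMonomial_add_one_snd hu,
    kernelMonomial_add_one_thd hv hu]
  rw [one_sub_mul_eq_add_sub_mul_cexp v u φ]
  subst ha hc
  rw [mul_assoc 2 I s]
  generalize I * s = t at hIs hpole ⊢
  field_simp
  ring

/-- Identity (14): the differential–difference identity for the kernel,
`(u∂/∂u + z̄∂/∂z̄ + α)K_α(φ,s;z,u)
  = -((-1/2+is)(-α+1/2+is)/(2is))K_α(φ,s+i;z,u) + ((1/2+is)(α-1/2+is)/(2is))K_α(φ,s-i;z,u)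
    - ((-α+1/2+is)/(2is(-1/2+is)))∂²/∂φ² K_α(φ,s+i;z,u)`,
for all `z,u ∈ D`, `φ ∈ [0,2π]`, and `s ∈ ℂ` with `s ∉ {0, -i/2}`. -/
theorem stmt_9 (α : ℝ) (hα : 1 < α) (z u : ℂ) (hz : z ∈ Disk) (hu : u ∈ Disk)
    (φ : ℝ) (hφ : φ ∈ Set.Icc (0:ℝ) (2*π)) (s : ℂ)
    (hs0 : s ≠ 0) (hs1 : s ≠ -Complex.I / 2) :
    u * deriv (fun u' => KB α φ s (starRingEnd ℂ z) u') u
      + (starRingEnd ℂ z) * deriv (fun v => KB α φ s v u) (starRingEnd ℂ z)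
      + (α : ℂ) * KB α φ s (starRingEnd ℂ z) u
    = -(((-(1/2 : ℂ) + Complex.I * s) * (-(α : ℂ) + 1/2 + Complex.I * s)) /
          (2 * Complex.I * s)) * KB α φ (s + Complex.I) (starRingEnd ℂ z) u
      + (((1/2 : ℂ) + Complex.I * s) * ((α : ℂ) - 1/2 + Complex.I * s)) /
          (2 * Complex.I * s) * KB α φ (s - Complex.I) (starRingEnd ℂ z) u
      - ((-(α : ℂ) + 1/2 + Complex.I * s) /
          (2 * Complex.I * s * (-(1/2 : ℂ) + Complex.I * s))) *
        deriv (deriv (fun ψ : ℝ => KB α ψ (s + Complex.I) (starRingEnd ℂ z) u)) φ :=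
  stmt_9_general α z u hz hu φ s hs0 hs1
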